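/- For m ≥ 0 and n ≥ m+3: if the Q_m-subcube fault diameter of Q_{n−1} is at most n, then for any family F of at most n−m−3 pairwise vertex-disjoint subcubes of dimension at most m in Q_{n−1}, the graph Q_{n−1} − F is connected with diameter at most n−1. -/

import Mathlib

open SimpleGraph

/-- The `n`-dimensional hypercube: vertices are `Fin n → Bool`,
adjacent iff Hamming distance is `1`. -/
def Q (n : ℕ) : SimpleGraph (Fin n → Bool) where
  Adj u v := hammingDist u v = 1
  symm := ⟨fun u v h => by rwa [hammingDist_comm]⟩
  loopless := ⟨fun u h => by simp [hammingDist_self] at h⟩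

/-- Flip the `i`-th bit of `x`. -/
def flipBit {n : ℕ} (x : Fin n → Bool) (i : Fin n) : Fin n → Bool :=
  Function.update x i (!x i)

/-- `S` is a subcube of dimension exactly `m` (fixing `n - m` coordinates). -/
def IsSubcube {n : ℕ} (m : ℕ) (S : Set (Fin n → Bool)) : Prop :=
  ∃ A : Finset (Fin n), A.card = n - m ∧ ∃ p : Fin n → Bool,
    S = {x | ∀ i ∈ A, x i = p i}

/-- `S` is a subcube of dimension at most `m` (fixing at least `n - m` coordinates). -/
def IsSubcubeLe {n : ℕ} (m : ℕ) (S : Set (Fin n → Bool)) : Prop :=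
  ∃ A : Finset (Fin n), n - m ≤ A.card ∧ ∃ p : Fin n → Bool,
    S = {x | ∀ i ∈ A, x i = p i}

/-!
The bound comes from a routing statement in the subcube with free coordinates `K`: if the faults
are subcubes of dimension at most `M` there and `|F| + M + 2 ≤ |K|`, two fault-free vertices
`x, y` are joined by a fault-free path of length at most `max (d x y) (|F| + M + 2)`.
Induction on `|K|`: pass to a half-cube `{w | w a = v}` in which either a fault disappears or
every surviving fault has `a` free, so that `|F| + M` drops. This works directly when `x, y`
agree at `a`; at a coordinate where they differ the path ends with the edge `flipBit y a → y`
(or starts with `x → flipBit x a`). If every such attempt is blocked, all neighbours of `y`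
towards `x` are faulty, which forces `d x y ≤ |F|`; then some fault fixes a coordinate on which
`x, y` agree, and the path flips it, crosses the opposite half-cube, and flips it back.
-/

namespace SubcubeFaults

open Finset Function

variable {N : ℕ}

@[simp]
lemma flipBit_apply_self (x : Fin N → Bool) (i : Fin N) : flipBit x i i = !x i := by
  simp [flipBit]

lemma flipBit_apply_of_ne (x : Fin N → Bool) {i j : Fin N} (h : j ≠ i) :
    flipBit x i j = x j := by
  simp [flipBit, h]

lemma flipBit_apply_self_of_ne {x y : Fin N → Bool} {i : Fin N} (h : x i ≠ y i) :
    flipBit y i i = x i := by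
  rw [flipBit_apply_self]
  cases hx : x i <;> cases hy : y i <;> simp_all

lemma adj_flipBit (x : Fin N → Bool) (i : Fin N) : (Q N).Adj x (flipBit x i) := by
  show #{j | x j ≠ flipBit x i j} = 1
  rw [card_eq_one]
  refine ⟨i, ext fun j => ?_⟩
  rcases eq_or_ne j i with rfl | hj
  · simp
  · simp [flipBit_apply_of_ne x hj, hj]

lemma hammingDist_flipBit_left {x y : Fin N → Bool} {i : Fin N} (h : x i ≠ y i) :
    hammingDist (flipBit x i) y + 1 = hammingDist x y := by
  have : ({j | flipBit x i j ≠ y j} : Finset (Fin N)) = ({j | x j ≠ y j} : Finset _).erase i := by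
    ext j
    rcases eq_or_ne j i with rfl | hj
    · simpa using h
    · simp [flipBit_apply_of_ne x hj, hj]
  rw [hammingDist, hammingDist, this, card_erase_add_one (by simpa using h)]

lemma hammingDist_flipBit_right {x y : Fin N → Bool} {i : Fin N} (h : x i ≠ y i) :
    hammingDist x (flipBit y i) + 1 = hammingDist x y := by
  rw [hammingDist_comm, hammingDist_comm x y]
  exact hammingDist_flipBit_left (Ne.symm h)

lemma hammingDist_flipBit_flipBit (x y : Fin N → Bool) (i : Fin N) :
    hammingDist (flipBit x i) (flipBit y i) = hammingDist x y := by
  have : ({j | flipBit x i j ≠ flipBit y i j} : Finset (Fin N)) =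
      ({j | x j ≠ y j} : Finset (Fin N)) := by
    ext j
    rcases eq_or_ne j i with rfl | hj
    · simp
    · simp [flipBit_apply_of_ne _ hj]
  rw [hammingDist, hammingDist, this]

/-- A subcube of `Q N`; only the values of `val` on `fixed` matter. -/
structure Face (N : ℕ) where
  fixed : Finset (Fin N)
  val : Fin N → Bool
  deriving DecidableEq

instance : Membership (Fin N → Bool) (Face N) :=
  ⟨fun q w => ∀ i ∈ q.fixed, w i = q.val i⟩

lemma Face.mem_iff {q : Face N} {w : Fin N → Bool} : w ∈ q ↔ ∀ i ∈ q.fixed, w i = q.val i :=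
  Iff.rfl

lemma Face.mem_of_flipBit_mem {q : Face N} {y : Fin N → Bool} {i j : Fin N} (hij : i ≠ j)
    (hi : flipBit y i ∈ q) (hj : flipBit y j ∈ q) : y ∈ q := by
  intro k hk
  rcases eq_or_ne k i with rfl | hki
  · rw [← hj k hk, flipBit_apply_of_ne y hij]
  · rw [← hi k hk, flipBit_apply_of_ne y hki]

def Avoids (F : Finset (Face N)) (w : Fin N → Bool) : Prop :=
  ∀ q ∈ F, w ∉ q

lemma Avoids.flipBit {F : Finset (Face N)} {w : Fin N → Bool} {a : Fin N} (hw : Avoids F w)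
    (h : ∀ q ∈ F, a ∈ q.fixed → q.val a = w a) : Avoids F (flipBit w a) := by
  intro q hq hmem
  by_cases ha : a ∈ q.fixed
  · have := hmem a ha
    rw [flipBit_apply_self, h q hq ha] at this
    cases w a <;> simp at this
  · exact hw q hq fun k hk => by
      rw [← hmem k hk, flipBit_apply_of_ne w (ne_of_mem_of_not_mem hk ha)]

/-- The faults as seen from the half-cube `{w | w a = v}`, where `a` is no longer a coordinate. -/
def restrict (F : Finset (Face N)) (a : Fin N) (v : Bool) : Finset (Face N) :=
  (F.filter fun q => a ∈ q.fixed → q.val a = v).image fun q => ⟨q.fixed.erase a, q.val⟩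

section Restrict

variable {F : Finset (Face N)} {a : Fin N} {v : Bool}

lemma mem_restrict {q' : Face N} :
    q' ∈ restrict F a v ↔
      ∃ q ∈ F, (a ∈ q.fixed → q.val a = v) ∧ (⟨q.fixed.erase a, q.val⟩ : Face N) = q' := by
  simp [restrict, and_assoc]

lemma card_restrict_le : (restrict F a v).card ≤ F.card :=
  card_image_le.trans (card_filter_le _ _)

lemma card_restrict_lt {q : Face N} (hq : q ∈ F) (ha : a ∈ q.fixed) (hv : q.val a ≠ v) :
    (restrict F a v).card < F.card := by
  refine card_image_le.trans_lt (card_lt_card ⟨filter_subset _ _, fun h => ?_⟩)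
  exact hv ((mem_filter.1 (h hq)).2 ha)

lemma avoids_restrict_iff {w : Fin N → Bool} :
    Avoids (restrict F a v) w ↔ Avoids F (update w a v) := by
  simp only [Avoids, mem_restrict, Face.mem_iff]
  constructor
  · intro h q hq hmem
    refine h _ ⟨q, hq, fun ha => ?_, rfl⟩ fun i hi => ?_
    · simpa using (hmem a ha).symm
    · simpa [(mem_erase.1 hi).1] using hmem i (mem_of_mem_erase hi)
  · rintro h _ ⟨q, hq, hcompat, rfl⟩ hmem
    refine h q hq fun i hi => ?_
    rcases eq_or_ne i a with rfl | hia
    · simpa using (hcompat hi).symm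
    · simpa [hia] using hmem i (mem_erase.2 ⟨hia, hi⟩)

lemma restrict_subset_of_free (hfree : ∀ q ∈ F, a ∈ q.fixed → q.val a ≠ v) :
    restrict F a v ⊆ F.filter fun q => a ∉ q.fixed := by
  intro q' hq'
  obtain ⟨q, hq, hcompat, rfl⟩ := mem_restrict.1 hq'
  have haq : a ∉ q.fixed := fun h => hfree q hq h (hcompat h)
  simpa [erase_eq_of_notMem haq] using And.intro hq haq

end Restrict

/-- Each fault lies in the subcube with free coordinates `K` and has dimension at most `M`
there. -/
structure FaultBudget (K : Finset (Fin N)) (F : Finset (Face N)) (M : ℕ) : Prop where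
  fixed_subset : ∀ q ∈ F, q.fixed ⊆ K
  card_le_card_fixed_add : ∀ q ∈ F, K.card ≤ q.fixed.card + M
  card_add_le : F.card + M + 2 ≤ K.card

def ShrinksOnHalf (K : Finset (Fin N)) (F : Finset (Face N)) (M : ℕ) (a : Fin N) (v : Bool)
    (s : ℕ) : Prop :=
  ∃ M', FaultBudget (K.erase a) (restrict F a v) M' ∧ (restrict F a v).card + M' + s ≤ F.card + M

namespace FaultBudget

variable {K : Finset (Fin N)} {F : Finset (Face N)} {M : ℕ} {a : Fin N} {v : Bool}

lemma shrinksOnHalf_of_drop (hb : FaultBudget K F M) {q : Face N} (hq : q ∈ F)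
    (ha : a ∈ q.fixed) (hv : q.val a ≠ v) : ShrinksOnHalf K F M a v 1 := by
  have hlt := card_restrict_lt hq ha hv
  have hK := card_erase_add_one (hb.fixed_subset q hq ha)
  have := hb.card_add_le
  refine ⟨M, ⟨?_, ?_, by omega⟩, by omega⟩
  · rintro _ hq'
    obtain ⟨p, hp, -, rfl⟩ := mem_restrict.1 hq'
    exact erase_subset_erase a (hb.fixed_subset p hp)
  · rintro _ hq'
    obtain ⟨p, hp, -, rfl⟩ := mem_restrict.1 hq'
    show (K.erase a).card ≤ (p.fixed.erase a).card + M
    have := hb.card_le_card_fixed_add p hp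
    have : p.fixed.card - 1 ≤ (p.fixed.erase a).card := pred_card_le_card_erase
    omega

/-- Without faults fixing `a` to `v`, every surviving fault has `a` as a free coordinate, so its
dimension drops in the half-cube; if `M = 0`, no fault survives. -/
lemma restrict_free (hb : FaultBudget K F M) (hF : F.Nonempty) (ha : a ∈ K)
    (hfree : ∀ q ∈ F, a ∈ q.fixed → q.val a ≠ v) :
    FaultBudget (K.erase a) (restrict F a v) (M - 1) ∧ (M = 0 → restrict F a v = ∅) := by
  have hsurv : ∀ q ∈ restrict F a v, q.fixed ⊆ K.erase a ∧ K.card ≤ q.fixed.card + M :=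
    fun q hq => by
      obtain ⟨hqF, haq⟩ := mem_filter.1 (restrict_subset_of_free hfree hq)
      exact ⟨subset_erase.2 ⟨hb.fixed_subset q hqF, haq⟩, hb.card_le_card_fixed_add q hqF⟩
  have hK := card_erase_add_one ha
  have hM : M = 0 → restrict F a v = ∅ := fun hM => eq_empty_of_forall_notMem fun q hq => by
    have := card_le_card (hsurv q hq).1
    have := (hsurv q hq).2
    omega
  refine ⟨⟨fun q hq => (hsurv q hq).1, fun q hq => by have := (hsurv q hq).2; omega, ?_⟩, hM⟩
  have := hb.card_add_le
  have := hF.card_pos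
  have := card_restrict_le (F := F) (a := a) (v := v)
  rcases Nat.eq_zero_or_pos M with h0 | hpos
  · rw [hM h0, card_empty]; omega
  · omega

lemma shrinksOnHalf_of_free (hb : FaultBudget K F M) (hF : F.Nonempty) (ha : a ∈ K)
    (hfree : ∀ q ∈ F, a ∈ q.fixed → q.val a ≠ v) : ShrinksOnHalf K F M a v 1 := by
  obtain ⟨hb', hM⟩ := hb.restrict_free hF ha hfree
  refine ⟨M - 1, hb', ?_⟩
  have := hF.card_pos
  have := card_restrict_le (F := F) (a := a) (v := v)
  rcases Nat.eq_zero_or_pos M with h0 | hpos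
  · rw [hM h0, card_empty]; omega
  · omega

lemma shrinksOnHalf_two_of_free (hb : FaultBudget K F M) (hF : 2 ≤ F.card)
    (hfree : ∀ q ∈ F, a ∈ q.fixed → q.val a ≠ v) {q : Face N} (hq : q ∈ F)
    (ha : a ∈ q.fixed) : ShrinksOnHalf K F M a v 2 := by
  obtain ⟨hb', hM⟩ := hb.restrict_free (card_pos.1 (by omega)) (hb.fixed_subset q hq ha) hfree
  refine ⟨M - 1, hb', ?_⟩
  have := card_restrict_lt hq ha (hfree q hq ha)
  rcases Nat.eq_zero_or_pos M with h0 | hpos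
  · rw [hM h0, card_empty]; omega
  · omega

lemma fixed_of_not_shrinksOnHalf (hb : FaultBudget K F M) (hF : F.Nonempty) (ha : a ∈ K)
    (h : ¬ ShrinksOnHalf K F M a v 1) :
    (∃ q ∈ F, a ∈ q.fixed) ∧ ∀ q ∈ F, a ∈ q.fixed → q.val a = v := by
  constructor
  · by_contra! hnone
    exact h (hb.shrinksOnHalf_of_free hF ha fun q hq haq => absurd haq (hnone q hq))
  · by_contra! hsome
    obtain ⟨q, hq, haq, hv⟩ := hsome
    exact h (hb.shrinksOnHalf_of_drop hq haq hv)

end FaultBudget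

def Routable (K : Finset (Fin N)) (F : Finset (Face N)) (x y : Fin N → Bool) (ℓ : ℕ) : Prop :=
  ∃ W : (Q N).Walk x y, W.length ≤ ℓ ∧ ∀ w ∈ W.support, (∀ j ∉ K, w j = x j) ∧ Avoids F w

namespace Routable

variable {K : Finset (Fin N)} {F : Finset (Face N)} {x y : Fin N → Bool} {ℓ : ℕ}

lemma nil (hx : Avoids F x) : Routable K F x x 0 :=
  ⟨.nil, le_rfl, by simpa using hx⟩

lemma mono (h : Routable K F x y ℓ) {ℓ' : ℕ} (hℓ : ℓ ≤ ℓ') : Routable K F x y ℓ' :=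
  let ⟨W, hW, hsupp⟩ := h
  ⟨W, hW.trans hℓ, hsupp⟩

lemma cons {x' : Fin N → Bool} (hadj : (Q N).Adj x x') (hoff : ∀ j ∉ K, x' j = x j)
    (hx : Avoids F x) (h : Routable K F x' y ℓ) : Routable K F x y (ℓ + 1) := by
  obtain ⟨W, hW, hsupp⟩ := h
  refine ⟨.cons hadj W, by simpa using hW, ?_⟩
  intro w hw
  rcases List.mem_cons.1 (Walk.support_cons hadj W ▸ hw) with rfl | hw
  · exact ⟨fun _ _ => rfl, hx⟩
  · exact ⟨fun j hj => ((hsupp w hw).1 j hj).trans (hoff j hj), (hsupp w hw).2⟩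

lemma symm (h : Routable K F x y ℓ) : Routable K F y x ℓ := by
  obtain ⟨W, hW, hsupp⟩ := h
  have hy := (hsupp y W.end_mem_support).1
  refine ⟨W.reverse, by simpa using hW, fun w hw => ?_⟩
  rw [Walk.support_reverse, List.mem_reverse] at hw
  exact ⟨fun j hj => ((hsupp w hw).1 j hj).trans (hy j hj).symm, (hsupp w hw).2⟩

lemma concat {y' : Fin N → Bool} (h : Routable K F x y' ℓ) (hadj : (Q N).Adj y' y)
    (hoff : ∀ j ∉ K, y' j = y j) (hy : Avoids F y) : Routable K F x y (ℓ + 1) :=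
  (h.symm.cons hadj.symm hoff hy).symm

lemma of_restrict {a : Fin N} {v : Bool} (h : Routable (K.erase a) (restrict F a v) x y ℓ)
    (hxa : x a = v) : Routable K F x y ℓ := by
  obtain ⟨W, hW, hsupp⟩ := h
  refine ⟨W, hW, fun w hw => ⟨fun j hj => (hsupp w hw).1 j (fun h => hj (mem_of_mem_erase h)), ?_⟩⟩
  have hwa : w a = v := ((hsupp w hw).1 a (notMem_erase a K)).trans hxa
  have := avoids_restrict_iff.1 (hsupp w hw).2
  rwa [← hwa, update_eq_self] at this

end Routable

lemma mem_of_ne_of_agree {K : Finset (Fin N)} {x y : Fin N → Bool} (hoff : ∀ j ∉ K, x j = y j)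
    {i : Fin N} (hi : x i ≠ y i) : i ∈ K :=
  not_imp_comm.1 (hoff i) hi

lemma routable_empty {K : Finset (Fin N)} {x y : Fin N → Bool} (hoff : ∀ j ∉ K, x j = y j) :
    Routable K ∅ x y (hammingDist x y) := by
  induction hd : hammingDist x y generalizing x with
  | zero => rw [hammingDist_eq_zero.1 hd]; exact .nil (by simp [Avoids])
  | succ d ih =>
    obtain ⟨i, hi⟩ : ∃ i, x i ≠ y i := by
      by_contra! h
      simp [funext h] at hd
    have hoff' : ∀ j ∉ K, flipBit x i j = x j := fun j hj =>
      flipBit_apply_of_ne x (ne_of_mem_of_not_mem (mem_of_ne_of_agree hoff hi) hj).symm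
    refine .cons (adj_flipBit x i) hoff' (by simp [Avoids]) (ih (fun j hj => ?_) ?_)
    · rw [hoff' j hj, hoff j hj]
    · have := hammingDist_flipBit_left hi
      omega

lemma routable_of_hammingDist_le_one {K : Finset (Fin N)} {F : Finset (Face N)}
    {x y : Fin N → Bool} (hd : hammingDist x y ≤ 1) (hoff : ∀ j ∉ K, x j = y j)
    (hx : Avoids F x) (hy : Avoids F y) : Routable K F x y 1 := by
  rcases Nat.le_one_iff_eq_zero_or_eq_one.1 hd with h0 | h1
  · rw [hammingDist_eq_zero.1 h0]
    exact (Routable.nil hy).mono zero_le_one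
  · exact .cons h1 (fun j hj => (hoff j hj).symm) hx (.nil hy)

lemma hammingDist_le_card_of_flipBit_blocked {F : Finset (Face N)} {x y : Fin N → Bool}
    (hy : Avoids F y) (hblocked : ∀ i, x i ≠ y i → ¬ Avoids F (flipBit y i)) :
    hammingDist x y ≤ F.card := by
  have hfault : ∀ i ∈ ({i | x i ≠ y i} : Finset (Fin N)), ∃ q ∈ F, flipBit y i ∈ q := by
    intro i hi
    simpa [Avoids] using hblocked i (mem_filter.1 hi).2
  have : Nonempty (Face N) := ⟨⟨∅, y⟩⟩
  choose! φ hφF hφmem using hfault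
  refine card_le_card_of_injOn φ hφF fun i hi j hj hij => ?_
  by_contra hne
  exact hy _ (hφF j hj) (Face.mem_of_flipBit_mem hne (hij ▸ hφmem i hi) (hφmem j hj))

def RoutingClaim (K : Finset (Fin N)) : Prop :=
  ∀ (F : Finset (Face N)) (M : ℕ) (x y : Fin N → Bool), FaultBudget K F M →
    (∀ j ∉ K, x j = y j) → Avoids F x → Avoids F y →
      Routable K F x y (max (hammingDist x y) (F.card + M + 2))

section Step

variable {K : Finset (Fin N)} {F : Finset (Face N)} {M : ℕ} {x y : Fin N → Bool}

lemma routable_of_shrinksOnHalf {a : Fin N} {v : Bool} {s : ℕ} (ih : RoutingClaim (K.erase a))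
    (hs : ShrinksOnHalf K F M a v s) (hxa : x a = v) (hya : y a = v)
    (hoff : ∀ j ∉ K, x j = y j) (hx : Avoids F x) (hy : Avoids F y) :
    Routable K F x y (max (hammingDist x y) (F.card + M + 2 - s)) := by
  obtain ⟨M', hb', hcard⟩ := hs
  have hoff' : ∀ j ∉ K.erase a, x j = y j := fun j hj => by
    rcases eq_or_ne j a with rfl | hja
    · rw [hxa, hya]
    · exact hoff j fun h => hj (mem_erase.2 ⟨hja, h⟩)
  have hW := ih _ M' x y hb' hoff' (avoids_restrict_iff.2 (by rwa [← hxa, update_eq_self]))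
    (avoids_restrict_iff.2 (by rwa [← hya, update_eq_self]))
  exact (hW.of_restrict hxa).mono (max_le_max le_rfl (by omega))

lemma routable_of_shrinksOnHalf_last (ih : ∀ a ∈ K, RoutingClaim (K.erase a)) {i : Fin N}
    (hi : x i ≠ y i) (hy' : Avoids F (flipBit y i)) (hs : ShrinksOnHalf K F M i (x i) 1)
    (hoff : ∀ j ∉ K, x j = y j) (hx : Avoids F x) (hy : Avoids F y) :
    Routable K F x y (max (hammingDist x y) (F.card + M + 2)) := by
  have hiK := mem_of_ne_of_agree hoff hi
  have hoff' : ∀ j ∉ K, flipBit y i j = y j := fun j hj =>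
    flipBit_apply_of_ne y (ne_of_mem_of_not_mem hiK hj).symm
  have hW := routable_of_shrinksOnHalf (ih i hiK) hs rfl (flipBit_apply_self_of_ne hi)
    (fun j hj => (hoff j hj).trans (hoff' j hj).symm) hx hy'
  have hd := hammingDist_flipBit_right hi
  exact (hW.concat (adj_flipBit y i).symm hoff' hy).mono (by omega)

lemma flipBit_blocked_of_not_shrinksOnHalf (hb : FaultBudget K F M) (hF : F.Nonempty)
    (hoff : ∀ j ∉ K, x j = y j) (hx : Avoids F x)
    (hlast : ∀ i, x i ≠ y i → Avoids F (flipBit y i) → ¬ ShrinksOnHalf K F M i (x i) 1)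
    (hfirst : ∀ i, x i ≠ y i → Avoids F (flipBit x i) → ¬ ShrinksOnHalf K F M i (y i) 1) :
    ∀ i, x i ≠ y i → ¬ Avoids F (flipBit y i) := by
  intro i hi hy'
  have hiK := mem_of_ne_of_agree hoff hi
  obtain ⟨⟨q, hq, hiq⟩, hfixed_x⟩ := hb.fixed_of_not_shrinksOnHalf hF hiK (hlast i hi hy')
  obtain ⟨-, hfixed_y⟩ :=
    hb.fixed_of_not_shrinksOnHalf hF hiK (hfirst i hi (hx.flipBit hfixed_x))
  exact hi ((hfixed_x q hq hiq).symm.trans (hfixed_y q hq hiq))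

lemma routable_of_flipBit_blocked (ih : ∀ a ∈ K, RoutingClaim (K.erase a))
    (hb : FaultBudget K F M) (hd : 2 ≤ hammingDist x y)
    (hagree : ∀ q ∈ F, ∀ a ∈ q.fixed, x a = y a → q.val a = x a)
    (hblocked : ∀ i, x i ≠ y i → ¬ Avoids F (flipBit y i))
    (hoff : ∀ j ∉ K, x j = y j) (hx : Avoids F x) (hy : Avoids F y) :
    Routable K F x y (max (hammingDist x y) (F.card + M + 2)) := by
  have hdF := hammingDist_le_card_of_flipBit_blocked hy hblocked
  obtain ⟨q, hq⟩ := card_pos.1 (show 0 < F.card by omega)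
  -- `q` has more fixed coordinates than `x` and `y` have differences
  obtain ⟨a, haq, hxya⟩ : ∃ a ∈ q.fixed, x a = y a := by
    by_contra! hdiff
    have : q.fixed.card ≤ hammingDist x y :=
      card_le_card fun i hi => mem_filter.2 ⟨mem_univ i, hdiff i hi⟩
    have := hb.card_le_card_fixed_add q hq
    have := hb.card_add_le
    have := card_le_card (hb.fixed_subset q hq)
    omega
  have hfixed : ∀ p ∈ F, a ∈ p.fixed → p.val a = x a := fun p hp hap => hagree p hp a hap hxya
  have hs : ShrinksOnHalf K F M a (!x a) 2 :=
    hb.shrinksOnHalf_two_of_free (by omega) (fun p hp hap => by simp [hfixed p hp hap]) hq haq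
  have haK := hb.fixed_subset q hq haq
  have hflip_off : ∀ w : Fin N → Bool, ∀ j ∉ K, flipBit w a j = w j := fun w j hj =>
    flipBit_apply_of_ne w (ne_of_mem_of_not_mem haK hj).symm
  have hW := routable_of_shrinksOnHalf (ih a haK) hs (flipBit_apply_self x a)
    (by rw [flipBit_apply_self, hxya])
    (fun j hj => by rw [hflip_off x j hj, hflip_off y j hj, hoff j hj])
    (hx.flipBit hfixed) (hy.flipBit (hxya ▸ hfixed))
  rw [hammingDist_flipBit_flipBit] at hW
  exact ((hW.cons (adj_flipBit x a) (hflip_off x) hx).concat (adj_flipBit y a).symm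
    (hflip_off y) hy).mono (by omega)

theorem routingClaim_of_erase (ih : ∀ a ∈ K, RoutingClaim (K.erase a)) : RoutingClaim K := by
  intro F M x y hb hoff hx hy
  rcases F.eq_empty_or_nonempty with rfl | hF
  · exact (routable_empty hoff).mono (le_max_left _ _)
  rcases le_or_gt (hammingDist x y) 1 with hd | hd
  · exact (routable_of_hammingDist_le_one hd hoff hx hy).mono (by omega)
  by_cases hdrop : ∃ q ∈ F, ∃ a ∈ q.fixed, x a = y a ∧ q.val a ≠ x a
  · obtain ⟨q, hq, a, haq, hxya, hv⟩ := hdrop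
    exact (routable_of_shrinksOnHalf (ih a (hb.fixed_subset q hq haq))
      (hb.shrinksOnHalf_of_drop hq haq hv) rfl hxya.symm hoff hx hy).mono
      (max_le_max le_rfl (by omega))
  by_cases hlast : ∃ i, x i ≠ y i ∧ Avoids F (flipBit y i) ∧ ShrinksOnHalf K F M i (x i) 1
  · obtain ⟨i, hi, hy', hs⟩ := hlast
    exact routable_of_shrinksOnHalf_last ih hi hy' hs hoff hx hy
  by_cases hfirst : ∃ i, x i ≠ y i ∧ Avoids F (flipBit x i) ∧ ShrinksOnHalf K F M i (y i) 1
  · obtain ⟨i, hi, hx', hs⟩ := hfirst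
    have := routable_of_shrinksOnHalf_last ih (Ne.symm hi) hx' hs
      (fun j hj => (hoff j hj).symm) hy hx
    rw [hammingDist_comm] at this
    exact this.symm
  push Not at hdrop hlast hfirst
  exact routable_of_flipBit_blocked ih hb hd hdrop
    (flipBit_blocked_of_not_shrinksOnHalf hb hF hoff hx hlast hfirst) hoff hx hy

end Step

theorem routingClaim (K : Finset (Fin N)) : RoutingClaim K := by
  induction K using Finset.strongInduction with
  | H K ih => exact routingClaim_of_erase fun a ha => ih _ (erase_ssubset ha)

lemma exists_faces_of_isSubcubeLe {m : ℕ} (F : Finset (Set (Fin N → Bool)))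
    (hF : ∀ S ∈ F, IsSubcubeLe m S) :
    ∃ G : Finset (Face N), G.card ≤ F.card ∧ (∀ q ∈ G, N - m ≤ q.fixed.card) ∧
      ∀ w, Avoids G w ↔ w ∉ ⋃₀ (F : Set (Set (Fin N → Bool))) := by
  classical
  induction F using Finset.induction_on with
  | empty => exact ⟨∅, by simp, by simp, by simp [Avoids]⟩
  | insert S F hS ih =>
    obtain ⟨G, hcard, hdim, havoid⟩ := ih fun T hT => hF T (mem_insert_of_mem hT)
    obtain ⟨A, hA, p, rfl⟩ := hF _ (mem_insert_self _ _)
    refine ⟨insert ⟨A, p⟩ G, ?_, ?_, fun w => ?_⟩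
    · grw [card_insert_le, card_insert_of_notMem hS, hcard]
    · exact forall_mem_insert _ _ _ |>.2 ⟨hA, hdim⟩
    · simp only [Avoids, forall_mem_insert, Set.mem_sUnion, coe_insert, Set.mem_insert_iff,
        exists_eq_or_imp, not_or]
      exact and_congr Iff.rfl (by simpa [Avoids] using havoid w)

end SubcubeFaults

theorem fewer_faults_diameter (n m : ℕ) (h : m + 3 ≤ n)
    (hyp : ∀ F : Finset (Set (Fin (n - 1) → Bool)), F.card ≤ n - m - 2 →
      (∀ S ∈ F, IsSubcubeLe m S) →
      (∀ S ∈ F, ∀ T ∈ F, S ≠ T → Disjoint S T) →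
      ((Q (n - 1)).induce (⋃₀ (↑F : Set (Set (Fin (n - 1) → Bool))))ᶜ).Connected ∧
      ∀ x y, ((Q (n - 1)).induce (⋃₀ (↑F : Set (Set (Fin (n - 1) → Bool))))ᶜ).dist x y ≤ n) :
    ∀ F : Finset (Set (Fin (n - 1) → Bool)), F.card ≤ n - m - 3 →
      (∀ S ∈ F, IsSubcubeLe m S) →
      (∀ S ∈ F, ∀ T ∈ F, S ≠ T → Disjoint S T) →
      ((Q (n - 1)).induce (⋃₀ (↑F : Set (Set (Fin (n - 1) → Bool))))ᶜ).Connected ∧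
      ∀ x y, ((Q (n - 1)).induce (⋃₀ (↑F : Set (Set (Fin (n - 1) → Bool))))ᶜ).dist x y ≤
        n - 1 := by
  intro F hcard hsub hdisj
  refine ⟨(hyp F (by omega) hsub hdisj).1, fun x y => ?_⟩
  obtain ⟨G, hGcard, hGdim, hGavoid⟩ := SubcubeFaults.exists_faces_of_isSubcubeLe F hsub
  have hb : SubcubeFaults.FaultBudget Finset.univ G m :=
    ⟨fun _ _ => Finset.subset_univ _,
      fun q hq => by have := hGdim q hq; simp only [Finset.card_univ, Fintype.card_fin]; omega,
      by simp only [Finset.card_univ, Fintype.card_fin]; omega⟩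
  obtain ⟨W, hlen, hsupp⟩ := SubcubeFaults.routingClaim Finset.univ G m x y hb (by simp)
    ((hGavoid x).2 x.2) ((hGavoid y).2 y.2)
  have hWs : ∀ w ∈ W.support, w ∈ (⋃₀ (↑F : Set (Set (Fin (n - 1) → Bool))))ᶜ :=
    fun w hw => (hGavoid w).1 (hsupp w hw).2
  calc _ ≤ (W.induce _ hWs).length := dist_le _
    _ = W.length := by rw [← Walk.length_map (Embedding.induce _).toHom, Walk.map_induce]; rfl
    _ ≤ n - 1 := hlen.trans (max_le
        (hammingDist_le_card_fintype.trans (by simp)) (by omega))
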